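/- Let n be a natural number and let x, y : Fin n → EuclideanSpace ℝ (Fin 3) be two point configurations. Then there exist a permutation σ of Fin n and a bijective isometry f of EuclideanSpace ℝ (Fin 3) (an E(3) transformation) such that y i = f (x (σ i)) for all i, if and only if there exists a permutation σ of Fin n such that dist (x i) (x j) = dist (y (σ i)) (y (σ j)) for all i, j. (In the paper's language: two geometric graphs are congruent iff their corresponding distance graphs are isomorphic.) -/

import Mathlib

/-!
Move one point of each configuration to the origin. The pairwise distances then determine,
by polarization, the Gram matrix of the remaining vectors. Families with equal Gram matrices
have linear combinations of equal norms, so `∑ cᵢ uᵢ ↦ ∑ cᵢ vᵢ` is a well-defined linear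
isometry on the span of the `uᵢ`. In finite dimensions it extends to an isometry of the whole
space.
-/

open scoped InnerProductSpace

section LinearIsometry

variable {𝕜 M E F : Type*} [Ring 𝕜] [AddCommGroup M] [Module 𝕜 M]
  [NormedAddCommGroup E] [Module 𝕜 E] [NormedAddCommGroup F] [Module 𝕜 F]

theorem LinearMap.exists_linearIsometry_range_of_norm_eq (A : M →ₗ[𝕜] E) (B : M →ₗ[𝕜] F)
    (h : ∀ c, ‖A c‖ = ‖B c‖) :
    ∃ L : LinearMap.range A →ₗᵢ[𝕜] F, ∀ c, L ⟨A c, LinearMap.mem_range_self A c⟩ = B c := by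
  have hker : LinearMap.ker A ≤ LinearMap.ker B := fun c hc => by
    rw [LinearMap.mem_ker, ← norm_eq_zero, ← h, hc, norm_zero]
  let L := ((LinearMap.ker A).liftQ B hker).comp A.quotKerEquivRange.symm.toLinearMap
  have hL : ∀ c, L ⟨A c, LinearMap.mem_range_self A c⟩ = B c := fun c => by
    simp only [L, LinearMap.comp_apply, LinearEquiv.coe_toLinearMap,
      LinearMap.quotKerEquivRange_symm_apply_image, Submodule.mkQ_apply, Submodule.liftQ_apply]
  refine ⟨⟨L, ?_⟩, hL⟩
  rintro ⟨_, c, rfl⟩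
  rw [hL, ← h]
  rfl

end LinearIsometry

section Gram

variable {𝕜 E ι : Type*} [RCLike 𝕜] [NormedAddCommGroup E] [InnerProductSpace 𝕜 E]
  {u v : ι → E}

theorem norm_linearCombination_eq_of_inner_eq (h : ∀ i j, ⟪u i, u j⟫_𝕜 = ⟪v i, v j⟫_𝕜)
    (c : ι →₀ 𝕜) :
    ‖Finsupp.linearCombination 𝕜 u c‖ = ‖Finsupp.linearCombination 𝕜 v c‖ := by
  have : ⟪Finsupp.linearCombination 𝕜 u c, Finsupp.linearCombination 𝕜 u c⟫_𝕜 =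
      ⟪Finsupp.linearCombination 𝕜 v c, Finsupp.linearCombination 𝕜 v c⟫_𝕜 := by
    simp only [Finsupp.linearCombination_apply, Finsupp.sum_inner, Finsupp.inner_sum,
      inner_smul_left, inner_smul_right, h]
  rw [@norm_eq_sqrt_re_inner 𝕜, @norm_eq_sqrt_re_inner 𝕜, this]

theorem exists_linearIsometryEquiv_of_inner_eq [FiniteDimensional 𝕜 E]
    (h : ∀ i j, ⟪u i, u j⟫_𝕜 = ⟪v i, v j⟫_𝕜) :
    ∃ F : E ≃ₗᵢ[𝕜] E, ∀ i, F (u i) = v i := by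
  obtain ⟨L, hL⟩ := LinearMap.exists_linearIsometry_range_of_norm_eq _ _
    (norm_linearCombination_eq_of_inner_eq h)
  refine ⟨L.extend.toLinearIsometryEquiv rfl, fun i => ?_⟩
  have hu : Finsupp.linearCombination 𝕜 u (Finsupp.single i 1) = u i := by simp
  have hv : Finsupp.linearCombination 𝕜 v (Finsupp.single i 1) = v i := by simp
  rw [LinearIsometry.coe_toLinearIsometryEquiv, ← hu, ← hv, ← hL]
  exact L.extend_apply ⟨_, LinearMap.mem_range_self _ _⟩

end Gram

theorem Congruent.exists_isometryEquiv {ι V P : Type*} [NormedAddCommGroup V]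
    [InnerProductSpace ℝ V] [FiniteDimensional ℝ V] [MetricSpace P] [NormedAddTorsor V P]
    {u v : ι → P} (h : Congruent u v) : ∃ f : P ≃ᵢ P, ∀ i, f (u i) = v i := by
  rcases isEmpty_or_nonempty ι with _ | ⟨⟨i₀⟩⟩
  · exact ⟨IsometryEquiv.refl P, isEmptyElim⟩
  have hdist : ∀ {w : ι → P} i j, ‖(w i -ᵥ w i₀) - (w j -ᵥ w i₀)‖ = dist (w i) (w j) :=
    fun i j => by rw [vsub_sub_vsub_cancel_right, dist_eq_norm_vsub]
  have hinner : ∀ i j, ⟪u i -ᵥ u i₀, u j -ᵥ u i₀⟫_ℝ = ⟪v i -ᵥ v i₀, v j -ᵥ v i₀⟫_ℝ := by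
    intro i j
    simp only [real_inner_eq_norm_mul_self_add_norm_mul_self_sub_norm_sub_mul_self_div_two,
      hdist, ← dist_eq_norm_vsub, congruent_iff_dist_eq.mp h _ _]
  obtain ⟨F, hF⟩ := exists_linearIsometryEquiv_of_inner_eq hinner
  refine ⟨((IsometryEquiv.vaddConst (u i₀)).symm.trans F.toIsometryEquiv).trans
    (IsometryEquiv.vaddConst (v i₀)), fun i => ?_⟩
  simp [hF]

theorem congruent_iff_distance_graphs_isomorphic (n : ℕ)
    (x y : Fin n → EuclideanSpace ℝ (Fin 3)) :
    (∃ (σ : Equiv.Perm (Fin n))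
        (f : EuclideanSpace ℝ (Fin 3) ≃ᵢ EuclideanSpace ℝ (Fin 3)),
        ∀ i, y i = f (x (σ i))) ↔
      (∃ σ : Equiv.Perm (Fin n),
        ∀ i j, dist (x i) (x j) = dist (y (σ i)) (y (σ j))) := by
  constructor
  · rintro ⟨σ, f, hf⟩
    exact ⟨σ⁻¹, fun i j => by simp [hf, f.dist_eq]⟩
  · rintro ⟨σ, hσ⟩
    obtain ⟨f, hf⟩ := (congruent_iff_dist_eq (v₂ := y ∘ σ)).mpr hσ |>.exists_isometryEquiv
    exact ⟨σ⁻¹, f, fun i => by simpa using (hf (σ⁻¹ i)).symm⟩
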